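/- arXiv:1912.03327 — 2 statements merged into one kernel-verified Lean document; each statement's English description precedes it below -/
import Mathlib

section
/- Every infinite separative poset contains an infinite antichain; consequently its Souslin number S(P) is at least ℵ₁. -/
/-!
If some `p` is splitting all the way down (every `q ≤ p` has two incompatible extensions), then
peeling off one half at each step of a descending sequence below `p` yields an infinite antichain.
Otherwise every element lies above some `q` whose extensions are pairwise compatible, and
separativity forces such a `q` to be minimal. The minimal elements then form an antichain, and
since by separativity an element is determined by the minimal elements below it, this antichain
is infinite as soon as `P` is.
-/

open Cardinal

section Compatibility

variable {P : Type*}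

def Compatible [LE P] (p q : P) : Prop := ∃ t, t ≤ p ∧ t ≤ q

def IsSeparative (P : Type*) [LE P] : Prop := ∀ p q : P, ¬ q ≤ p → ∃ r, r ≤ q ∧ ¬ Compatible r p

theorem Compatible.symm [LE P] {p q : P} (h : Compatible p q) : Compatible q p :=
  let ⟨t, hp, hq⟩ := h; ⟨t, hq, hp⟩

theorem compatible_refl [Preorder P] (p : P) : Compatible p p := ⟨p, le_rfl, le_rfl⟩

theorem exists_infinite_pairwise_not_compatible_of_splitting [Preorder P] {p : P}
    (hp : ∀ q ≤ p, ∃ a ≤ q, ∃ b ≤ q, ¬ Compatible a b) :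
    ∃ A : Set P, A.Pairwise (fun a b => ¬ Compatible a b) ∧ A.Infinite := by
  choose left hleft right hright hsplit using fun q : Set.Iic p => hp q q.2
  let s : ℕ → Set.Iic p := fun n => n.rec ⟨p, le_rfl⟩ fun _ q => ⟨right q, (hright q).trans q.2⟩
  have hs : Antitone fun n => (s n).1 := by
    refine antitone_nat_of_succ_le fun n => ?_
    exact hright (s n)
  let a : ℕ → P := fun n => left (s n)
  have ha : Pairwise fun m n => ¬ Compatible (a m) (a n) := by
    have : Std.Symm fun p q : P => ¬ Compatible p q := ⟨fun _ _ h h' => h h'.symm⟩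
    refine (Std.Symm.pairwise_on (r := fun p q : P => ¬ Compatible p q) a).2 fun m n hmn => ?_
    rintro ⟨t, htm, htn⟩
    exact hsplit (s m) ⟨t, htm, htn.trans <| (hleft (s n)).trans (hs hmn)⟩
  have hinj : Function.Injective a := fun m n hmn =>
    by_contra fun hne => ha hne (hmn ▸ compatible_refl (a m))
  exact ⟨Set.range a, ha.range_pairwise, Set.infinite_range_of_injective hinj⟩

end Compatibility

section Separative

variable {P : Type*} [PartialOrder P]

theorem IsMin.not_compatible {m m' : P} (hm : IsMin m) (hm' : IsMin m') (hne : m ≠ m') :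
    ¬ Compatible m m' := fun ⟨_, ht, ht'⟩ => hne ((hm.eq_of_le ht).symm.trans (hm'.eq_of_le ht'))

theorem IsSeparative.isMin_of_forall_compatible (hP : IsSeparative P) {q : P}
    (hq : ∀ a ≤ q, ∀ b ≤ q, Compatible a b) : IsMin q := by
  intro x hxq
  by_contra hqx
  obtain ⟨r, hrq, hrx⟩ := hP x q hqx
  exact hrx (hq r hrq x hxq)

theorem IsSeparative.le_of_forall_isMin_le (hP : IsSeparative P) (hmin : ∀ p : P, ∃ m ≤ p, IsMin m)
    {p q : P} (h : ∀ m, IsMin m → m ≤ q → m ≤ p) : q ≤ p := by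
  by_contra hqp
  obtain ⟨r, hrq, hrp⟩ := hP p q hqp
  obtain ⟨m, hmr, hm⟩ := hmin r
  exact hrp ⟨m, hmr, h m hm (hmr.trans hrq)⟩

theorem IsSeparative.infinite_setOf_isMin [Infinite P] (hP : IsSeparative P)
    (hmin : ∀ p : P, ∃ m ≤ p, IsMin m) : {m : P | IsMin m}.Infinite := by
  intro hfin
  have : Finite {m : P | IsMin m} := hfin.to_subtype
  let below : P → Set {m : P | IsMin m} := fun p => {m | (m : P) ≤ p}
  have hinj : Function.Injective below := fun p q hpq =>
    le_antisymm
      (hP.le_of_forall_isMin_le hmin fun m hm hmp => (Set.ext_iff.1 hpq ⟨m, hm⟩).1 hmp)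
      (hP.le_of_forall_isMin_le hmin fun m hm hmq => (Set.ext_iff.1 hpq ⟨m, hm⟩).2 hmq)
  have := Finite.of_injective below hinj
  exact not_finite P

theorem IsSeparative.exists_infinite_pairwise_not_compatible [Infinite P] (hP : IsSeparative P) :
    ∃ A : Set P, A.Pairwise (fun a b => ¬ Compatible a b) ∧ A.Infinite := by
  by_cases hsplit : ∃ p : P, ∀ q ≤ p, ∃ a ≤ q, ∃ b ≤ q, ¬ Compatible a b
  · obtain ⟨p, hp⟩ := hsplit
    exact exists_infinite_pairwise_not_compatible_of_splitting hp
  push Not at hsplit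
  have hmin : ∀ p : P, ∃ m ≤ p, IsMin m := fun p =>
    let ⟨q, hqp, hq⟩ := hsplit p
    ⟨q, hqp, hP.isMin_of_forall_compatible hq⟩
  exact ⟨_, fun m hm m' hm' => IsMin.not_compatible hm hm', hP.infinite_setOf_isMin hmin⟩

end Separative

theorem aleph_one_le_sInf_of_downward_closed {α : Type*} {Q : Set α → Prop}
    (hQ : ∀ ⦃A B⦄, Q A → B ⊆ A → Q B) {A : Set α} (hA : Q A) (hAinf : A.Infinite) :
    aleph 1 ≤ sInf {κ : Cardinal | ¬ ∃ B : Set α, Q B ∧ #B = κ} := by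
  refine le_csInf ⟨Order.succ #α, fun ⟨B, _, hB⟩ => ?_⟩ fun κ hκ => ?_
  · exact (Order.lt_succ #α).not_ge (hB ▸ mk_set_le B)
  by_contra hlt
  rw [not_le, ← succ_aleph0, Order.lt_succ_iff] at hlt
  have : Infinite A := hAinf.to_subtype
  obtain ⟨B, hBA, hB⟩ := le_mk_iff_exists_subset.1 (hlt.trans (aleph0_le_mk A))
  exact hκ ⟨B, hQ hA hBA, hB⟩

/-- Every infinite separative poset contains an infinite antichain, and so
its Souslin number (the least cardinal κ such that there is no antichain of size κ)
is at least ℵ₁. -/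
theorem stmt_2 {P : Type*} [PartialOrder P] [Infinite P]
    (sep : ∀ p q : P, ¬ q ≤ p → ∃ r, r ≤ q ∧ ¬ ∃ t : P, t ≤ r ∧ t ≤ p) :
    (∃ A : Set P, (∀ p ∈ A, ∀ q ∈ A, p ≠ q → ¬ ∃ t : P, t ≤ p ∧ t ≤ q) ∧ A.Infinite) ∧
    aleph 1 ≤ sInf {κ : Cardinal |
      ¬ ∃ A : Set P, (∀ p ∈ A, ∀ q ∈ A, p ≠ q → ¬ ∃ t : P, t ≤ p ∧ t ≤ q) ∧ #A = κ} := by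
  obtain ⟨A, hA, hAinf⟩ := IsSeparative.exists_infinite_pairwise_not_compatible sep
  exact ⟨⟨A, hA, hAinf⟩,
    aleph_one_le_sInf_of_downward_closed (fun _ _ hB hBA => Set.Pairwise.mono hBA hB) hA hAinf⟩
end

section
/- Assume 𝔟 = 𝔡 = ℵ₁, and suppose ⟨f_α : α < ω₁⟩ is a sequence in ω^ω such that {f_α : α < ω₁} is dominating, f_α ≤* f_β whenever α < β, and for every α < ω₁ and k ∈ ω the set {β < ω₁ : f_β(n) ≤ f_α(n) for all n ≥ k} is finite. Then D = {(s, f_α) : s ∈ ω^{<ω}, α < ω₁} is a dense subset of the Hechler forcing ℍ and every condition of ℍ extends only finitely many elements of D; hence πNt(ℍ) = ℵ₀. -/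
open Cardinal

def LeStar (f g : ℕ → ℕ) : Prop := ∀ᶠ n in Filter.cofinite, f n ≤ g n

noncomputable def bNum : Cardinal.{0} :=
  sInf {c : Cardinal | ∃ A : Set (ℕ → ℕ), #A = c ∧ ¬ ∃ g, ∀ f ∈ A, LeStar f g}

noncomputable def dNum : Cardinal.{0} :=
  sInf {c : Cardinal | ∃ A : Set (ℕ → ℕ), #A = c ∧ ∀ f, ∃ g ∈ A, LeStar f g}

abbrev Hechler : Type := List ℕ × (ℕ → ℕ)

def HLe (p q : Hechler) : Prop :=
  q.1 <+: p.1 ∧ (∀ n, p.1.length ≤ n → q.2 n ≤ p.2 n) ∧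
    (∀ n, q.1.length ≤ n → n < p.1.length → q.2 n ≤ p.1.getD n 0)

/-! Density of `{(s, f α)}` comes from domination: extend the stem of `(s, g)` by the values of
`g` until `f α` dominates `g` pointwise. Conversely, a condition `(s, g)` extends `(t, f β)` only
if `t` is a prefix of `s` and `f β ≤ g` beyond `|s|`; since `g` is dominated by some `f α`, the
hypothesis on the sequence leaves only finitely many `β`. Finitely many is optimal: by repeatedly
lengthening the stem, every dense set has chains of any finite length extended by one condition. -/

def HDense (D : Set Hechler) : Prop := ∀ p, ∃ q ∈ D, HLe q p

theorem HLe.refl (p : Hechler) : HLe p p :=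
  ⟨List.prefix_rfl, fun _ _ => le_rfl, fun _ h₁ h₂ => absurd h₁ (by omega)⟩

theorem HLe.trans {p q r : Hechler} (hpq : HLe p q) (hqr : HLe q r) : HLe p r := by
  obtain ⟨hpre, htail, hstem⟩ := hpq
  obtain ⟨hpre', htail', hstem'⟩ := hqr
  refine ⟨hpre'.trans hpre, fun n hn => (htail' n (hpre.length_le.trans hn)).trans (htail n hn),
    fun n hn₁ hn₂ => ?_⟩
  rcases lt_or_ge n q.1.length with hq | hq
  · obtain ⟨u, hu⟩ := hpre
    calc r.2 n ≤ q.1.getD n 0 := hstem' n hn₁ hq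
      _ = p.1.getD n 0 := by rw [← hu, List.getD_append _ _ _ _ hq]
  · exact (htail' n hq).trans (hstem n hq hn₂)

theorem LeStar.exists_tail_le {f g : ℕ → ℕ} (h : LeStar f g) :
    ∃ k, ∀ n, k ≤ n → f n ≤ g n := by
  rwa [LeStar, Nat.cofinite_eq_atTop, Filter.eventually_atTop] at h

/-- The stem is extended by the values of `g`, so the new stem obeys the old function. -/
theorem exists_hLe_of_tail_le {s : List ℕ} {g h : ℕ → ℕ} {k : ℕ}
    (hk : ∀ n, k ≤ n → g n ≤ h n) : ∃ t, k ≤ t.length ∧ HLe (t, h) (s, g) := by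
  have hlen : k ≤ (s ++ (List.range' s.length (k - s.length)).map g).length := by simp; omega
  refine ⟨_, hlen, List.prefix_append _ _, fun n hn => hk n (hlen.trans hn), fun n hn₁ hn₂ => ?_⟩
  dsimp only at hn₁ hn₂ ⊢
  simp only [List.length_append, List.length_map, List.length_range'] at hn₂
  rw [List.getD_append_right _ _ _ _ hn₁, List.getD_eq_getElem _ _ (by simp; omega)]
  simp only [List.getElem_map, List.getElem_range']
  exact le_of_eq (congrArg g (by omega))

theorem exists_hLe_length_lt (p : Hechler) : ∃ q, HLe q p ∧ p.1.length < q.1.length := by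
  obtain ⟨t, ht, hle⟩ := exists_hLe_of_tail_le (s := p.1) (k := p.1.length + 1)
    (fun n _ => le_refl (p.2 n))
  exact ⟨(t, p.2), hle, ht⟩

theorem finite_setOf_prefix (s : List ℕ) : {t | t <+: s}.Finite :=
  s.inits.finite_toSet.subset fun t ht => (List.mem_inits t s).2 ht

theorem setOf_hLe_subset (p : Hechler) :
    {q | HLe p q} ⊆ {t | t <+: p.1} ×ˢ {h | ∀ n, p.1.length ≤ n → h n ≤ p.2 n} :=
  fun _ hq => ⟨hq.1, hq.2.1⟩

section Dominating

variable {ι : Type*} {f : ι → ℕ → ℕ}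

theorem hDense_setOf_snd_mem_range (hdom : ∀ h, ∃ α, LeStar h (f α)) :
    HDense {r | ∃ α, r.2 = f α} := by
  rintro ⟨s, g⟩
  obtain ⟨α, hα⟩ := hdom g
  obtain ⟨k, hk⟩ := hα.exists_tail_le
  obtain ⟨t, -, hle⟩ := exists_hLe_of_tail_le (s := s) hk
  exact ⟨(t, f α), ⟨α, rfl⟩, hle⟩

theorem finite_setOf_hLe_snd_mem_range (hdom : ∀ h, ∃ α, LeStar h (f α))
    (hfin : ∀ α k, {β | ∀ n, k ≤ n → f β n ≤ f α n}.Finite) (p : Hechler) :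
    {q | (∃ α, q.2 = f α) ∧ HLe p q}.Finite := by
  obtain ⟨α, hα⟩ := hdom p.2
  obtain ⟨k, hk⟩ := hα.exists_tail_le
  have hβ : {h | ∀ n, p.1.length ≤ n → h n ≤ p.2 n} ∩ Set.range f ⊆
      f '' {β | ∀ n, max k p.1.length ≤ n → f β n ≤ f α n} := by
    rintro _ ⟨hle, β, rfl⟩
    exact ⟨β, fun n hn => (hle n (le_of_max_le_right hn)).trans (hk n (le_of_max_le_left hn)), rfl⟩
  refine ((finite_setOf_prefix p.1).prod (((hfin α _).image f).subset hβ)).subset ?_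
  rintro q ⟨⟨β, hβ⟩, hq⟩
  exact ⟨(setOf_hLe_subset p hq).1, (setOf_hLe_subset p hq).2, β, hβ.symm⟩

end Dominating

theorem exists_finset_hLe_card_eq {D : Set Hechler} (hD : HDense D) (n : ℕ) :
    ∃ p, ∃ F : Finset Hechler, F.card = n ∧ ∀ q ∈ F, q ∈ D ∧ HLe p q := by
  classical
  induction n with
  | zero => exact ⟨([], id), ∅, rfl, by simp⟩
  | succ n ih =>
    obtain ⟨p, F, hcard, hF⟩ := ih
    obtain ⟨p', hp'p, hlen⟩ := exists_hLe_length_lt p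
    obtain ⟨q, hqD, hqp'⟩ := hD p'
    have hqp : HLe q p := hqp'.trans hp'p
    -- every member of `F` has a stem no longer than that of `p`, unlike `q`
    have hqF : q ∉ F := fun hq =>
      absurd ((hF q hq).2.1.length_le.trans_lt (hlen.trans_le hqp'.1.length_le)) (lt_irrefl _)
    refine ⟨q, insert q F, by rw [Finset.card_insert_of_notMem hqF, hcard], ?_⟩
    simp only [Finset.mem_insert, forall_eq_or_imp]
    exact ⟨⟨hqD, HLe.refl q⟩, fun r hr => ⟨(hF r hr).1, hqp.trans (hF r hr).2⟩⟩

theorem aleph0_le_of_hDense {D : Set Hechler} (hD : HDense D) {c : Cardinal}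
    (hc : ∀ p, #{q | q ∈ D ∧ HLe p q} < c) : ℵ₀ ≤ c := by
  refine aleph0_le.2 fun n => ?_
  obtain ⟨p, F, hcard, hF⟩ := exists_finset_hLe_card_eq hD n
  calc (n : Cardinal) = #(F : Set Hechler) := by simp [hcard]
    _ ≤ #{q | q ∈ D ∧ HLe p q} := mk_le_mk_of_subset hF
    _ ≤ c := (hc p).le

theorem stmt_14_general
    (f : (aleph 1).ord.ToType → (ℕ → ℕ))
    (hdom : ∀ h : ℕ → ℕ, ∃ α, LeStar h (f α))
    (hfin : ∀ α, ∀ k : ℕ, {β | ∀ n, k ≤ n → f β n ≤ f α n}.Finite) :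
    (∀ p : Hechler, ∃ q ∈ {r : Hechler | ∃ α, r.2 = f α}, HLe q p) ∧
    (∀ p : Hechler, {q : Hechler | (∃ α, q.2 = f α) ∧ HLe p q}.Finite) ∧
    sInf {c : Cardinal | ∃ D : Set Hechler,
      (∀ p : Hechler, ∃ q ∈ D, HLe q p) ∧
      ∀ p : Hechler, #{q : Hechler | q ∈ D ∧ HLe p q} < c} = ℵ₀ := by
  have hdense := hDense_setOf_snd_mem_range hdom
  have hfinite := finite_setOf_hLe_snd_mem_range hdom hfin
  have hmem : ℵ₀ ∈ {c : Cardinal | ∃ D : Set Hechler, HDense D ∧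
      ∀ p, #{q | q ∈ D ∧ HLe p q} < c} :=
    ⟨_, hdense, fun p => lt_aleph0_iff_set_finite.2 (hfinite p)⟩
  refine ⟨hdense, hfinite, le_antisymm (csInf_le' hmem) (le_csInf ⟨_, hmem⟩ ?_)⟩
  rintro c ⟨D, hD, hc⟩
  exact aleph0_le_of_hDense hD hc

/-- If 𝔟 = 𝔡 = ℵ₁ and ⟨f_α : α < ω₁⟩ is a ≤*-increasing dominating
sequence such that for each α and k only finitely many f_β are ≤ f_α beyond k, then
D = {(s, f_α)} is dense in ℍ, every condition extends only finitely many members of D,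
and hence πNt(ℍ) = ℵ₀. -/
theorem stmt_14 (hb : bNum = aleph 1) (hd : dNum = aleph 1)
    (f : (aleph 1).ord.ToType → (ℕ → ℕ))
    (hdom : ∀ h : ℕ → ℕ, ∃ α, LeStar h (f α))
    (hmono : ∀ α β, α < β → LeStar (f α) (f β))
    (hfin : ∀ α, ∀ k : ℕ, {β | ∀ n, k ≤ n → f β n ≤ f α n}.Finite) :
    (∀ p : Hechler, ∃ q ∈ {r : Hechler | ∃ α, r.2 = f α}, HLe q p) ∧
    (∀ p : Hechler, {q : Hechler | (∃ α, q.2 = f α) ∧ HLe p q}.Finite) ∧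
    sInf {c : Cardinal | ∃ D : Set Hechler,
      (∀ p : Hechler, ∃ q ∈ D, HLe q p) ∧
      ∀ p : Hechler, #{q : Hechler | q ∈ D ∧ HLe p q} < c} = ℵ₀ :=
  stmt_14_general f hdom hfin
end
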